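/- Assume in addition that σ_n = T almost surely for every n ∈ ℕ, and that for some p ≥ 1 one has sup_{n ∈ ℕ} 𝔼[ sup_{t ∈ [0,T]} ‖X_n(t)‖^p ] < ∞. Then 𝔼[ sup_{t ∈ [0,T]} ‖X_∞(t)‖^p ] < ∞; in particular X_∞ ∈ L^p(Ω; C([0,T]; E)). -/

import Mathlib

/-!
Fix `r > 0`. Up to its exit time from the ball of radius `r` a path agrees with its localized
version, so `min (sup ‖X‖) r = min (sup ‖X^{(r)}‖) r` for `X = X_n` and `X = X_∞`. With the
sup-norm triangle inequality this gives
`min (sup ‖X_∞‖) r ≤ sup ‖X_n‖ + sup ‖X_n^{(r)} - X_∞^{(r)}‖`,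
and the last term vanishes a.s. along a subsequence. Fatou's lemma then bounds
`𝔼[min (sup ‖X_∞‖) r ^ p]` by `sup_n 𝔼[sup ‖X_n‖ ^ p]`, and a second application of Fatou's
lemma lets `r → ∞`.
-/

open MeasureTheory Filter Set Topology

section Paths

variable {E : Type*} [NormedAddCommGroup E] {T r : ℝ} {f g : ℝ → E}

noncomputable def pathSup (T : ℝ) (f : ℝ → E) : ℝ := ⨆ t : Icc (0 : ℝ) T, ‖f t‖

/-- The paper's stopping time `ρ^{(r)}` for a path without explosion on `[0, T]`. -/
noncomputable def exitTime (T r : ℝ) (f : ℝ → E) : ℝ :=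
  sInf ({t : ℝ | t ∈ Ioo 0 T ∧ r < ‖f t‖} ∪ {T})

lemma pathSup_nonneg : 0 ≤ pathSup T f :=
  Real.iSup_nonneg fun _ => norm_nonneg _

lemma bddAbove_range_norm (hf : ContinuousOn f (Icc 0 T)) :
    BddAbove (range fun t : Icc (0 : ℝ) T => ‖f t‖) := by
  simpa only [image_eq_range] using (isCompact_Icc.image_of_continuousOn hf.norm).bddAbove

lemma norm_le_pathSup (hf : ContinuousOn f (Icc 0 T)) {t : ℝ} (ht : t ∈ Icc 0 T) :
    ‖f t‖ ≤ pathSup T f :=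
  le_ciSup (bddAbove_range_norm hf) ⟨t, ht⟩

lemma pathSup_le_add_pathSup_sub (hT : 0 ≤ T) (hf : ContinuousOn f (Icc 0 T))
    (hg : ContinuousOn g (Icc 0 T)) :
    pathSup T g ≤ pathSup T f + pathSup T (fun t => f t - g t) := by
  have : Nonempty (Icc (0 : ℝ) T) := ⟨⟨0, le_rfl, hT⟩⟩
  refine ciSup_le fun t => ?_
  calc ‖g t‖ ≤ ‖f t‖ + ‖f t - g t‖ := norm_le_norm_add_norm_sub _ _
    _ ≤ _ := add_le_add (norm_le_pathSup hf t.2) (norm_le_pathSup (hf.sub hg) t.2)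

lemma pathSup_eq_iSup_rat (hT : 0 ≤ T) (hf : ContinuousOn f (Icc 0 T)) :
    pathSup T f = ⨆ q : ℚ, ‖f (projIcc 0 T hT q)‖ := by
  have hdense : DenseRange fun q : ℚ => projIcc 0 T hT q :=
    (projIcc_surjective hT).denseRange.comp Rat.denseRange_cast continuous_projIcc
  rw [← iSup_range' (fun t : Icc (0 : ℝ) T => ‖f t‖)]
  exact (hdense.ciSup' hf.domRestrict.norm).symm

/-- Junk value: a path exploding inside `(0, T]` has unbounded norm on `[0, T]`, so the real
supremum `pathSup` is `0`. -/
lemma pathSup_eq_zero_of_explosion {σ : ℝ} (hσ₀ : 0 < σ) (hσT : σ ≤ T)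
    (hexpl : ∀ M : ℝ, ∃ᶠ t in 𝓝[<] σ, M < ‖f t‖) : pathSup T f = 0 := by
  refine Real.iSup_of_not_bddAbove fun ⟨M, hM⟩ => ?_
  have hmem : ∀ᶠ t in 𝓝[<] σ, t ∈ Ioo 0 σ :=
    inter_mem (eventually_nhdsWithin_of_eventually_nhds (eventually_gt_nhds hσ₀))
      self_mem_nhdsWithin
  obtain ⟨t, hMt, ht⟩ := ((hexpl M).and_eventually hmem).exists
  exact hMt.not_ge (hM ⟨⟨t, ht.1.le, ht.2.le.trans hσT⟩, rfl⟩)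

lemma exitTime_eq_or_le_norm (hf : ContinuousOn f (Icc 0 T)) :
    exitTime T r f = T ∨ exitTime T r f ∈ Icc 0 T ∧ r ≤ ‖f (exitTime T r f)‖ := by
  set S := {t : ℝ | t ∈ Ioo 0 T ∧ r < ‖f t‖}
  have hbdd : BddBelow (S ∪ {T}) :=
    BddBelow.union ⟨0, fun t ht => ht.1.1.le⟩ bddBelow_singleton
  have hmem := csInf_mem_closure (union_nonempty.2 (Or.inr (singleton_nonempty T))) hbdd
  rw [closure_union, closure_singleton] at hmem
  rcases hmem with hmem | hmem
  · right
    have hclosed : IsClosed (Icc 0 T ∩ (fun t => ‖f t‖) ⁻¹' Ici r) :=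
      hf.norm.preimage_isClosed_of_isClosed isClosed_Icc isClosed_Ici
    have hsub : S ⊆ Icc 0 T ∩ (fun t => ‖f t‖) ⁻¹' Ici r :=
      fun t ht => ⟨Ioo_subset_Icc_self ht.1, ht.2.le⟩
    exact closure_minimal hsub hclosed hmem
  · exact Or.inl hmem

lemma min_pathSup_eq_of_eqOn_exitTime (hf : ContinuousOn f (Icc 0 T))
    (hg : ContinuousOn g (Icc 0 T)) (hgf : EqOn g f (Icc 0 (exitTime T r f))) :
    min (pathSup T f) r = min (pathSup T g) r := by
  rcases exitTime_eq_or_le_norm hf with hT | ⟨hmem, hr⟩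
  · rw [hT] at hgf
    exact congrArg (min · r) (iSup_congr fun t => by rw [hgf t.2])
  · have hgρ : g (exitTime T r f) = f (exitTime T r f) := hgf ⟨hmem.1, le_rfl⟩
    rw [min_eq_right (hr.trans (norm_le_pathSup hf hmem)),
      min_eq_right (hr.trans (hgρ ▸ norm_le_pathSup hg hmem))]

lemma min_pathSup_le_pathSup_add (hT : 0 ≤ T) {x y x' y' : ℝ → E}
    (hx : ContinuousOn x (Icc 0 T)) (hy : ContinuousOn y (Icc 0 T))
    (hx' : ContinuousOn x' (Icc 0 T)) (hy' : ContinuousOn y' (Icc 0 T))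
    (hyx : EqOn y x (Icc 0 (exitTime T r x))) (hy'x' : EqOn y' x' (Icc 0 (exitTime T r x'))) :
    min (pathSup T x') r ≤ pathSup T x + pathSup T (fun t => y t - y' t) := by
  set D := pathSup T (fun t => y t - y' t)
  calc min (pathSup T x') r = min (pathSup T y') r :=
        min_pathSup_eq_of_eqOn_exitTime hx' hy' hy'x'
    _ ≤ min (pathSup T y + D) (r + D) :=
      min_le_min (pathSup_le_add_pathSup_sub hT hy hy') (le_add_of_nonneg_right pathSup_nonneg)
    _ = min (pathSup T x) r + D := by
      rw [min_add_add_right, min_pathSup_eq_of_eqOn_exitTime hx hy hyx]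
    _ ≤ pathSup T x + D := add_le_add_left (min_le_left _ _) _

end Paths

section Measurability

variable {Ω E : Type*} [MeasurableSpace Ω] [NormedAddCommGroup E] [MeasurableSpace E]
  [OpensMeasurableSpace E] {T : ℝ} {X : ℝ → Ω → E}

lemma measurable_iSup_rat_norm (hX : Measurable fun p : ℝ × Ω => X p.1 p.2) (hT : 0 ≤ T) :
    Measurable fun ω => ⨆ q : ℚ, ‖X (projIcc 0 T hT q) ω‖ :=
  Measurable.iSup fun _ => (hX.comp (measurable_const.prodMk measurable_id)).norm

lemma aemeasurable_pathSup {μ : Measure Ω} (hX : Measurable fun p : ℝ × Ω => X p.1 p.2)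
    (hT : 0 ≤ T) (hcont : ∀ᵐ ω ∂μ, ContinuousOn (X · ω) (Icc 0 T)) :
    AEMeasurable (fun ω => pathSup T (X · ω)) μ :=
  (measurable_iSup_rat_norm hX hT).aemeasurable.congr <| by
    filter_upwards [hcont] with ω hω using (pathSup_eq_iSup_rat hT hω).symm

lemma measurable_pathSup_of_eq_zero_off {s : Set Ω}
    (hX : Measurable fun p : ℝ × Ω => X p.1 p.2) (hT : 0 ≤ T) (hs : MeasurableSet s)
    (hcont : ∀ ω ∈ s, ContinuousOn (X · ω) (Icc 0 T))
    (hzero : ∀ ω ∉ s, pathSup T (X · ω) = 0) :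
    Measurable fun ω => pathSup T (X · ω) := by
  classical
  have heq : (fun ω => pathSup T (X · ω))
      = s.piecewise (fun ω => ⨆ q : ℚ, ‖X (projIcc 0 T hT q) ω‖) 0 := by
    ext ω
    by_cases hω : ω ∈ s
    · rw [piecewise_eq_of_mem _ _ _ hω, pathSup_eq_iSup_rat hT (hcont ω hω)]
    · rw [piecewise_eq_of_notMem _ _ _ hω, hzero ω hω, Pi.zero_apply]
  rw [heq]
  exact (measurable_iSup_rat_norm hX hT).piecewise hs measurable_const

end Measurability

section Fatou

variable {Ω : Type*} [MeasurableSpace Ω] {μ : Measure Ω} {p : ℝ} {C : ENNReal} {S : Ω → ℝ}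

lemma lintegral_ofReal_rpow_le_of_eventually_le_add (hp : 0 ≤ p) {Z D : ℕ → Ω → ℝ}
    (hS : ∀ ω, 0 ≤ S ω) (hZ : ∀ k ω, 0 ≤ Z k ω) (hZm : ∀ k, AEMeasurable (Z k) μ)
    (hZC : ∀ k, ∫⁻ ω, ENNReal.ofReal (Z k ω ^ p) ∂μ ≤ C)
    (hD : ∀ᵐ ω ∂μ, Tendsto (D · ω) atTop (𝓝 0))
    (hSZ : ∀ᵐ ω ∂μ, ∀ᶠ k in atTop, S ω ≤ Z k ω + D k ω) :
    ∫⁻ ω, ENNReal.ofReal (S ω ^ p) ∂μ ≤ C := by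
  have hF : Continuous fun x : ℝ => ENNReal.ofReal (x ^ p) :=
    ENNReal.continuous_ofReal.comp (Real.continuous_rpow_const hp)
  have hpt : ∀ᵐ ω ∂μ, ENNReal.ofReal (S ω ^ p)
      ≤ liminf (fun k => ENNReal.ofReal (Z k ω ^ p)) atTop := by
    filter_upwards [hD, hSZ] with ω hDω hSZω
    have hlim : Tendsto (fun k => max (S ω - D k ω) 0) atTop (𝓝 (S ω)) := by
      simpa [max_eq_left (hS ω)] using
        (hDω.const_sub (S ω)).max (tendsto_const_nhds (x := (0 : ℝ)))
    rw [← ((hF.tendsto _).comp hlim).liminf_eq]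
    refine liminf_le_liminf (hSZω.mono fun k hk => ?_)
    exact ENNReal.ofReal_le_ofReal <| Real.rpow_le_rpow (le_max_right _ _)
      (max_le (by linarith) (hZ k ω)) hp
  calc ∫⁻ ω, ENNReal.ofReal (S ω ^ p) ∂μ
      ≤ ∫⁻ ω, liminf (fun k => ENNReal.ofReal (Z k ω ^ p)) atTop ∂μ := lintegral_mono_ae hpt
    _ ≤ liminf (fun k => ∫⁻ ω, ENNReal.ofReal (Z k ω ^ p) ∂μ) atTop :=
      lintegral_liminf_le' fun k => hF.measurable.comp_aemeasurable (hZm k)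
    _ ≤ C := liminf_le_of_frequently_le' (Frequently.of_forall hZC)

lemma lintegral_ofReal_rpow_le_of_forall_min_le (hp : 0 ≤ p) (hS : ∀ ω, 0 ≤ S ω)
    (hSm : AEMeasurable S μ) (h : ∀ r > 0, ∫⁻ ω, ENNReal.ofReal (min (S ω) r ^ p) ∂μ ≤ C) :
    ∫⁻ ω, ENNReal.ofReal (S ω ^ p) ∂μ ≤ C := by
  refine lintegral_ofReal_rpow_le_of_eventually_le_add hp
    (Z := fun k ω => min (S ω) (k + 1)) (D := 0) hS (fun k ω => le_min (hS ω) k.cast_add_one_pos.le)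
    (fun k => hSm.min aemeasurable_const) (fun k => h _ k.cast_add_one_pos)
    (ae_of_all _ fun _ => tendsto_const_nhds) (ae_of_all _ fun ω => ?_)
  filter_upwards [tendsto_natCast_atTop_atTop.eventually_ge_atTop (S ω)] with k hk
  simp only [Pi.zero_apply, add_zero, le_min_iff, le_rfl, true_and]
  linarith

end Fatou

theorem stmt_9_general
    {Ω : Type*} [MeasurableSpace Ω] (P : Measure Ω)
    {E : Type*} [NormedAddCommGroup E]
    [MeasurableSpace E] [BorelSpace E]
    (T : ℝ) (hT : 0 < T)
    -- the explosion times σ_n (n ∈ ℕ) and σ_∞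
    (σ : ℕ → Ω → ℝ) (σi : Ω → ℝ)
    (hσimeas : Measurable σi)
    (hσimem : ∀ ω, σi ω ∈ Set.Ioc 0 T)
    -- the processes X_n (n ∈ ℕ) and X_∞, jointly measurable
    (X : ℕ → ℝ → Ω → E) (Xi : ℝ → Ω → E)
    (hXmeas : ∀ n, Measurable fun p : ℝ × Ω => X n p.1 p.2)
    (hXimeas : Measurable fun p : ℝ × Ω => Xi p.1 p.2)
    -- path continuity on [0, σ_n(ω)), and on [0,T] if σ_n(ω) = T
    (hXcontT : ∀ n ω, σ n ω = T → ContinuousOn (fun t => X n t ω) (Set.Icc 0 T))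
    (hXicontT : ∀ ω, σi ω = T → ContinuousOn (fun t => Xi t ω) (Set.Icc 0 T))
    -- σ_n is an explosion time: on {σ_n < T}, limsup_{t ↑ σ_n} ‖X_n(t)‖ = ∞
    (hexpli : ∀ ω, σi ω < T →
      ∀ M : ℝ, ∃ᶠ t in nhdsWithin (σi ω) (Set.Iio (σi ω)), M < ‖Xi t ω‖)
    -- the stopping times ρ_n^{(r)} = inf { t ∈ (0, σ_n) : ‖X_n(t)‖ > r }, inf ∅ := T
    (ρ : ℕ → ℝ → Ω → ℝ) (ρi : ℝ → Ω → ℝ)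
    (hρ : ∀ n r ω, ρ n r ω = sInf ({t : ℝ | t ∈ Set.Ioo 0 (σ n ω) ∧ r < ‖X n t ω‖} ∪ {T}))
    (hρi : ∀ r ω, ρi r ω = sInf ({t : ℝ | t ∈ Set.Ioo 0 (σi ω) ∧ r < ‖Xi t ω‖} ∪ {T}))
    -- the globally defined processes X_n^{(r)} (denoted Y n r) and X_∞^{(r)} (denoted Yi r)
    (Y : ℕ → ℝ → ℝ → Ω → E) (Yi : ℝ → ℝ → Ω → E)
    (hYcont : ∀ n r ω, Continuous fun t => Y n r t ω)
    (hYicont : ∀ r ω, Continuous fun t => Yi r t ω)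
    -- assumption (a)
    (ha : ∀ n r, 0 < r → ∀ᵐ ω ∂P, ∀ t ∈ Set.Icc 0 (ρ n r ω), Y n r t ω = X n t ω)
    (hai : ∀ r, 0 < r → ∀ᵐ ω ∂P, ∀ t ∈ Set.Icc 0 (ρi r ω), Yi r t ω = Xi t ω)
    -- assumption (b): X_n^{(r)} → X_∞^{(r)} in L⁰(Ω; C([0,T]; E))
    (hb : ∀ r, 0 < r → TendstoInMeasure P
      (fun n ω => ⨆ t : Set.Icc (0:ℝ) T, ‖Y n r (t : ℝ) ω - Yi r (t : ℝ) ω‖)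
      atTop (fun _ => (0 : ℝ)))
    -- additionally: σ_n = T almost surely for all n ∈ ℕ
    (hσT : ∀ n, ∀ᵐ ω ∂P, σ n ω = T)
    -- and sup_n 𝔼[ sup_t ‖X_n(t)‖^p ] < ∞ for some p ≥ 1
    (p : ℝ) (hp : 1 ≤ p) (C : ENNReal) (hC : C < ⊤)
    (hbdd : ∀ n : ℕ,
      ∫⁻ ω, ENNReal.ofReal ((⨆ t : Set.Icc (0:ℝ) T, ‖X n (t : ℝ) ω‖) ^ p) ∂P ≤ C) :
    ∫⁻ ω, ENNReal.ofReal ((⨆ t : Set.Icc (0:ℝ) T, ‖Xi (t : ℝ) ω‖) ^ p) ∂P < ⊤ := by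
  have hp₀ : 0 ≤ p := zero_le_one.trans hp
  have hexit : ∀ {x : ℝ → E} {s r : ℝ}, s = T →
      sInf ({t : ℝ | t ∈ Ioo 0 s ∧ r < ‖x t‖} ∪ {T}) = exitTime T r x := by
    rintro x s r rfl; rfl
  have hSm : Measurable fun ω => pathSup T (Xi · ω) :=
    measurable_pathSup_of_eq_zero_off hXimeas hT.le
      (measurableSet_eq_fun hσimeas measurable_const) hXicontT fun ω hω => pathSup_eq_zero_of_explosion (hσimem ω).1 (hσimem ω).2
        (hexpli ω (lt_of_le_of_ne (hσimem ω).2 hω))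
  refine (lintegral_ofReal_rpow_le_of_forall_min_le hp₀ (fun _ => pathSup_nonneg)
    hSm.aemeasurable fun r hr => ?_).trans_lt hC
  obtain ⟨ns, -, hns⟩ := (hb r hr).exists_seq_tendsto_ae
  refine lintegral_ofReal_rpow_le_of_eventually_le_add hp₀
    (D := fun k ω => pathSup T fun t => Y (ns k) r t ω - Yi r t ω)
    (fun _ => le_min pathSup_nonneg hr.le) (fun _ _ => pathSup_nonneg)
    (fun k => aemeasurable_pathSup (hXmeas (ns k)) hT.le
      (by filter_upwards [hσT (ns k)] with ω hω using hXcontT _ ω hω))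
    (fun k => hbdd (ns k)) hns ?_
  filter_upwards [ae_all_iff.2 fun k => hσT (ns k), ae_all_iff.2 fun k => ha (ns k) r hr,
    hai r hr] with ω hσω hYX hYiXi
  refine Eventually.of_forall fun k => ?_
  rcases (hσimem ω).2.eq_or_lt with hσi | hσi
  · exact min_pathSup_le_pathSup_add hT.le (hXcontT _ ω (hσω k)) (hYcont _ r ω).continuousOn
      (hXicontT ω hσi) (hYicont r ω).continuousOn
      (by rw [← hexit (hσω k), ← hρ]; exact hYX k) (by rw [← hexit hσi, ← hρi]; exact hYiXi)
  · rw [pathSup_eq_zero_of_explosion (hσimem ω).1 (hσimem ω).2 (hexpli ω hσi)]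
    exact (min_le_left _ _).trans (add_nonneg pathSup_nonneg pathSup_nonneg)

theorem stmt_9
    {Ω : Type*} [MeasurableSpace Ω] (P : Measure Ω) [IsProbabilityMeasure P]
    {E : Type*} [NormedAddCommGroup E] [NormedSpace ℝ E] [CompleteSpace E]
    [MeasurableSpace E] [BorelSpace E]
    (T : ℝ) (hT : 0 < T)
    -- the explosion times σ_n (n ∈ ℕ) and σ_∞
    (σ : ℕ → Ω → ℝ) (σi : Ω → ℝ)
    (hσmeas : ∀ n, Measurable (σ n)) (hσimeas : Measurable σi)
    (hσmem : ∀ n ω, σ n ω ∈ Set.Ioc 0 T) (hσimem : ∀ ω, σi ω ∈ Set.Ioc 0 T)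
    -- the processes X_n (n ∈ ℕ) and X_∞, jointly measurable
    (X : ℕ → ℝ → Ω → E) (Xi : ℝ → Ω → E)
    (hXmeas : ∀ n, Measurable fun p : ℝ × Ω => X n p.1 p.2)
    (hXimeas : Measurable fun p : ℝ × Ω => Xi p.1 p.2)
    -- path continuity on [0, σ_n(ω)), and on [0,T] if σ_n(ω) = T
    (hXcont : ∀ n ω, ContinuousOn (fun t => X n t ω) (Set.Ico 0 (σ n ω)))
    (hXcontT : ∀ n ω, σ n ω = T → ContinuousOn (fun t => X n t ω) (Set.Icc 0 T))
    (hXicont : ∀ ω, ContinuousOn (fun t => Xi t ω) (Set.Ico 0 (σi ω)))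
    (hXicontT : ∀ ω, σi ω = T → ContinuousOn (fun t => Xi t ω) (Set.Icc 0 T))
    -- σ_n is an explosion time: on {σ_n < T}, limsup_{t ↑ σ_n} ‖X_n(t)‖ = ∞
    (hexpl : ∀ n ω, σ n ω < T →
      ∀ M : ℝ, ∃ᶠ t in nhdsWithin (σ n ω) (Set.Iio (σ n ω)), M < ‖X n t ω‖)
    (hexpli : ∀ ω, σi ω < T →
      ∀ M : ℝ, ∃ᶠ t in nhdsWithin (σi ω) (Set.Iio (σi ω)), M < ‖Xi t ω‖)
    -- the stopping times ρ_n^{(r)} = inf { t ∈ (0, σ_n) : ‖X_n(t)‖ > r }, inf ∅ := T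
    (ρ : ℕ → ℝ → Ω → ℝ) (ρi : ℝ → Ω → ℝ)
    (hρ : ∀ n r ω, ρ n r ω = sInf ({t : ℝ | t ∈ Set.Ioo 0 (σ n ω) ∧ r < ‖X n t ω‖} ∪ {T}))
    (hρi : ∀ r ω, ρi r ω = sInf ({t : ℝ | t ∈ Set.Ioo 0 (σi ω) ∧ r < ‖Xi t ω‖} ∪ {T}))
    -- the globally defined processes X_n^{(r)} (denoted Y n r) and X_∞^{(r)} (denoted Yi r)
    (Y : ℕ → ℝ → ℝ → Ω → E) (Yi : ℝ → ℝ → Ω → E)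
    (hYmeas : ∀ n r, Measurable fun p : ℝ × Ω => Y n r p.1 p.2)
    (hYimeas : ∀ r, Measurable fun p : ℝ × Ω => Yi r p.1 p.2)
    (hYcont : ∀ n r ω, Continuous fun t => Y n r t ω)
    (hYicont : ∀ r ω, Continuous fun t => Yi r t ω)
    -- assumption (a)
    (ha : ∀ n r, 0 < r → ∀ᵐ ω ∂P, ∀ t ∈ Set.Icc 0 (ρ n r ω), Y n r t ω = X n t ω)
    (hai : ∀ r, 0 < r → ∀ᵐ ω ∂P, ∀ t ∈ Set.Icc 0 (ρi r ω), Yi r t ω = Xi t ω)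
    -- assumption (b): X_n^{(r)} → X_∞^{(r)} in L⁰(Ω; C([0,T]; E))
    (hb : ∀ r, 0 < r → TendstoInMeasure P
      (fun n ω => ⨆ t : Set.Icc (0:ℝ) T, ‖Y n r (t : ℝ) ω - Yi r (t : ℝ) ω‖)
      atTop (fun _ => (0 : ℝ)))
    -- additionally: σ_n = T almost surely for all n ∈ ℕ
    (hσT : ∀ n, ∀ᵐ ω ∂P, σ n ω = T)
    -- and sup_n 𝔼[ sup_t ‖X_n(t)‖^p ] < ∞ for some p ≥ 1
    (p : ℝ) (hp : 1 ≤ p) (C : ENNReal) (hC : C < ⊤)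
    (hbdd : ∀ n : ℕ,
      ∫⁻ ω, ENNReal.ofReal ((⨆ t : Set.Icc (0:ℝ) T, ‖X n (t : ℝ) ω‖) ^ p) ∂P ≤ C) :
    ∫⁻ ω, ENNReal.ofReal ((⨆ t : Set.Icc (0:ℝ) T, ‖Xi (t : ℝ) ω‖) ^ p) ∂P < ⊤ :=
  stmt_9_general P T hT σ σi hσimeas hσimem X Xi hXmeas hXimeas hXcontT hXicontT hexpli ρ ρi hρ hρi
    Y Yi hYcont hYicont ha hai hb hσT p hp C hC hbdd
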